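/- For the one-sided Plancherel state with parameter γL, the state of the element p^{#}_{ρ,I} of the center of U(gl(I)) equals |I|^{ℓ(ρ)} (γL)^{|ρ|}, for every partition ρ and finite index set I. -/

import Mathlib

/-!
Write `f x = exp (γL (tr x - |I|))`. Every derivative of `f` in the direction of a matrix unit
`E_{ab}` multiplies it by `γL δ_{ab}`, and `f 1 = 1`; so at the identity the word indexed by
`(α, i)` is `(γL)^k ∏_t δ(α_t, i_t) δ(α_t, i_{s t})`. Summing over `α` forces `α = i` and leaves
the number of `i : Fin k → I` with `i ∘ s = i`, i.e. of functions constant on the cycles of `s`,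
which is `|I|` to the number of cycles of `s`, fixed points included.
-/

/-- The result of applying the differential-operator word
`x_{α₁i₁}⋯x_{α_k i_k} ∂_{α₁ i_{σ(1)}}⋯∂_{α_k i_{σ(k)}}` (in the matrix coordinates
`x_{ab}`, `a, b ∈ S`) to a smooth function `f` of the matrix variables, evaluated at
the point `x`: first take the mixed partial derivative of `f` in the coordinate
directions `(α_t, i_{σ(t)})` and then multiply by the coordinates `x_{α_t i_t}`. -/
noncomputable def matWord (S : Finset ℕ) (k : ℕ)
    (α i : Fin k → {a // a ∈ S}) (σ : Fin k → Fin k)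
    (f : ({a // a ∈ S} → {a // a ∈ S} → ℝ) → ℝ)
    (x : {a // a ∈ S} → {a // a ∈ S} → ℝ) : ℝ :=
  (∏ t, x (α t) (i t)) *
    iteratedFDeriv ℝ k f x (fun t => Pi.single (α t) (Pi.single (i (σ t)) (1 : ℝ)))

open Finset

theorem iteratedFDeriv_exp_affine_apply {E : Type*} [NormedAddCommGroup E] [NormedSpace ℝ E]
    (g : E →L[ℝ] ℝ) (c : ℝ) (n : ℕ) (x : E) (m : Fin n → E) :
    iteratedFDeriv ℝ n (fun y => Real.exp (g y + c)) x m = Real.exp (g x + c) * ∏ t, g (m t) := by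
  induction n generalizing x with
  | zero => simp
  | succ n ih =>
    have hderiv : fderiv ℝ (fun y => Real.exp (g y + c)) = fun y => Real.exp (g y + c) • g :=
      funext fun y => ((g.hasFDerivAt.add_const c).exp).fderiv
    have hsmooth : ContDiffAt ℝ n (fun y => Real.exp (g y + c)) x :=
      (Real.contDiff_exp.comp (g.contDiff.add contDiff_const)).contDiffAt
    rw [iteratedFDeriv_succ_apply_right, hderiv, iteratedFDeriv_smul_const_apply hsmooth]
    simp [ih, Fin.prod_univ_castSucc, Fin.init, mul_assoc]

namespace Equiv.Perm

variable {α : Type*} [Fintype α] (s : Perm α)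

theorem SameCycle.apply_eq_of_forall_apply_eq {J : Type*} {i : α → J}
    (hi : ∀ t, i t = i (s t)) {a b : α} (hab : s.SameCycle a b) : i a = i b := by
  obtain ⟨n, -, rfl⟩ := hab.exists_pow_eq'
  have : i ∘ s^[n] = i := Function.iterate_invariant (funext fun t => (hi t).symm) n
  rw [coe_pow, ← Function.comp_apply (f := i), this]

def invariantFunEquiv (J : Type*) :
    {i : α → J // ∀ t, i t = i (s t)} ≃ (Quotient (SameCycle.setoid s) → J) where
  toFun i := Quotient.lift i.1 fun _ _ => SameCycle.apply_eq_of_forall_apply_eq s i.2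
  invFun j := ⟨fun t => j ⟦t⟧,
    fun t => congrArg j (Quotient.sound (SameCycle.refl s t).apply_right)⟩
  left_inv _ := rfl
  right_inv _ := funext fun q => Quotient.inductionOn q fun _ => rfl

variable [DecidableEq α]

def cycleClassOf (x : α) : s.cycleFactorsFinset ⊕ Function.fixedPoints s :=
  if h : s x = x then Sum.inr ⟨x, Function.mem_fixedPoints.2 h⟩
  else Sum.inl ⟨s.cycleOf x, cycleOf_mem_cycleFactorsFinset_iff.2 (mem_support.2 h)⟩

theorem cycleClassOf_eq_iff {x y : α} :
    cycleClassOf s x = cycleClassOf s y ↔ s.SameCycle x y := by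
  unfold cycleClassOf
  split_ifs with hx hy hy
  · simp only [Sum.inr.injEq, Subtype.mk.injEq]
    exact ⟨fun h => h ▸ SameCycle.refl s x, fun h => h.eq_of_left hx⟩
  · simpa using fun h => hy (h.apply_eq_self_iff.1 hx)
  · simpa using fun h => hx (h.apply_eq_self_iff.2 hy)
  · simpa using (sameCycle_iff_cycleOf_eq_of_mem_support (mem_support.2 hx)
      (mem_support.2 hy)).symm

theorem cycleClassOf_surjective : Function.Surjective (cycleClassOf s) := by
  rintro (⟨c, hc⟩ | ⟨x, hx⟩)
  · obtain ⟨x, hxc⟩ := (mem_cycleFactorsFinset_iff.1 hc).1.nonempty_support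
    have hxs : s x ≠ x := mem_support.1 (mem_cycleFactorsFinset_support_le hc hxc)
    refine ⟨x, ?_⟩
    simp [cycleClassOf, hxs, cycle_is_cycleOf hxc hc]
  · exact ⟨x, by simp [cycleClassOf, hx.eq]⟩

noncomputable def sameCycleQuotientEquiv :
    Quotient (SameCycle.setoid s) ≃ s.cycleFactorsFinset ⊕ Function.fixedPoints s :=
  Equiv.ofBijective (Quotient.lift (cycleClassOf s) fun _ _ => (cycleClassOf_eq_iff s).2)
    ⟨fun p q => Quotient.inductionOn₂ p q fun _ _ h =>
        Quotient.sound ((cycleClassOf_eq_iff s).1 h),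
      fun y => let ⟨x, hx⟩ := cycleClassOf_surjective s y; ⟨⟦x⟧, hx⟩⟩

theorem natCard_sameCycle_quotient :
    Nat.card (Quotient (SameCycle.setoid s)) =
      s.cycleType.card + (Fintype.card α - s.cycleType.sum) := by
  rw [Nat.card_congr (sameCycleQuotientEquiv s), Nat.card_sum, Nat.card_eq_fintype_card,
    Nat.card_eq_fintype_card, card_fixedPoints, Fintype.card_coe, cycleType_def,
    Multiset.card_map]
  rfl

theorem natCard_invariantFun (J : Type*) [Fintype J] :
    Nat.card {i : α → J // ∀ t, i t = i (s t)} =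
      Fintype.card J ^ (s.cycleType.card + (Fintype.card α - s.cycleType.sum)) := by
  rw [Nat.card_congr (invariantFunEquiv s J), Nat.card_fun, natCard_sameCycle_quotient,
    Nat.card_eq_fintype_card]

end Equiv.Perm

def traceCLM (ι : Type*) [Fintype ι] : (ι → ι → ℝ) →L[ℝ] ℝ :=
  ∑ a, (ContinuousLinearMap.proj a).comp
    (ContinuousLinearMap.proj (R := ℝ) (φ := fun _ : ι => ι → ℝ) a)

section MatrixCoordinates

variable {ι : Type*} [Fintype ι]

theorem traceCLM_apply (x : ι → ι → ℝ) : traceCLM ι x = ∑ a, x a a := by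
  simp [traceCLM]

theorem traceCLM_single [DecidableEq ι] (a b : ι) :
    traceCLM ι (Pi.single a (Pi.single b 1)) = if a = b then 1 else 0 := by
  simp [traceCLM_apply, Pi.single_apply, ite_apply, eq_comm]

end MatrixCoordinates

theorem matWord_exp_affine (S : Finset ℕ) (k : ℕ) (α i : Fin k → S) (σ : Fin k → Fin k)
    (g : (S → S → ℝ) →L[ℝ] ℝ) (c : ℝ) (x : S → S → ℝ) :
    matWord S k α i σ (fun y => Real.exp (g y + c)) x =
      Real.exp (g x + c) * ∏ t, x (α t) (i t) * g (Pi.single (α t) (Pi.single (i (σ t)) 1)) := by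
  rw [matWord, iteratedFDeriv_exp_affine_apply, Finset.prod_mul_distrib]
  ring

theorem matWord_exp_trace_at_id (S : Finset ℕ) (k : ℕ) (α i : Fin k → S) (σ : Fin k → Fin k)
    (c : ℝ) :
    matWord S k α i σ (fun x => Real.exp (c * ∑ a, (x a a - 1)))
        (fun a b => if a = b then 1 else 0) =
      ∏ t, (if α t = i t then 1 else 0) * (c * if α t = i (σ t) then 1 else 0) := by
  set g := c • traceCLM S
  have hexp : (fun x : S → S → ℝ => Real.exp (c * ∑ a, (x a a - 1))) =
      fun x => Real.exp (g x + -g (fun a b => if a = b then 1 else 0)) := by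
    funext x
    congr 1
    simp only [g, FunLike.coe_smul, Pi.smul_apply, smul_eq_mul, traceCLM_apply, if_true,
      sum_sub_distrib, sum_const, card_univ, nsmul_one]
    ring
  rw [hexp, matWord_exp_affine, add_neg_cancel, Real.exp_zero, one_mul]
  simp only [g, FunLike.coe_smul, Pi.smul_apply, traceCLM_single, smul_eq_mul]

theorem Fintype.sum_pi_prod_ite_eq_mul {ι J R : Type*} [Fintype ι] [DecidableEq ι] [Fintype J]
    [DecidableEq J] [CommSemiring R] (i : ι → J) (F : ι → J → R) :
    ∑ α : ι → J, ∏ t, (if α t = i t then 1 else 0) * F t (α t) = ∏ t, F t (i t) := by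
  rw [← Fintype.prod_sum fun t j => (if j = i t then 1 else 0) * F t j]
  simp

theorem Fintype.sum_sum_prod_ite_eq_natCard {ι J R : Type*} [Fintype ι] [DecidableEq ι]
    [Fintype J] [DecidableEq J] [CommSemiring R] (σ : ι → ι) (c : R) :
    ∑ i : ι → J, ∑ α : ι → J,
        ∏ t, (if α t = i t then 1 else 0) * (c * if α t = i (σ t) then 1 else 0) =
      c ^ Fintype.card ι * Nat.card {i : ι → J // ∀ t, i t = i (σ t)} := by
  have hsum (i : ι → J) :
      ∑ α : ι → J, ∏ t, (if α t = i t then 1 else 0) * (c * if α t = i (σ t) then 1 else 0) =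
        c ^ Fintype.card ι * if ∀ t, i t = i (σ t) then 1 else 0 := by
    rw [Fintype.sum_pi_prod_ite_eq_mul i fun t j => c * if j = i (σ t) then 1 else 0,
      prod_mul_distrib, prod_const, Fintype.prod_boole, card_univ]
  simp_rw [hsum]
  rw [← mul_sum, sum_boole, ← Fintype.card_subtype, Nat.card_eq_fintype_card]

theorem statement12 (γ L : ℝ)
    (I : Finset ℕ) (k : ℕ) (s : Equiv.Perm (Fin k)) :
    (∑ i : Fin k → {a // a ∈ I}, ∑ α : Fin k → {a // a ∈ I},
        matWord I k α i (fun t => s t)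
          (fun x => Real.exp (γ * L * ∑ a, (x a a - 1)))
          (fun a b => if a = b then 1 else 0)) =
      (I.card : ℝ) ^ (s.cycleType.card + (k - s.cycleType.sum)) * (γ * L) ^ k := by
  simp_rw [matWord_exp_trace_at_id, Fintype.sum_sum_prod_ite_eq_natCard, s.natCard_invariantFun,
    Fintype.card_coe, Fintype.card_fin]
  push_cast
  ring
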